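/- For every w ∈ W_p, the orbit of w·λ + pX under the dot action of W_I on X/pX has exactly |W_I| elements; that is, N_I(w·λ) = |W_I|. -/

import Mathlib

noncomputable section

/-- The real vector space `X ⊗ ℝ`, where `X` is a free abelian group of rank `r`. -/
abbrev Vr (r : ℕ) := Fin r → ℝ

/-- The lattice `X` (identified with `ℤ^r`); its dual lattice `Y` is identified with
the same coordinate lattice via the standard perfect pairing. -/
abbrev Lr (r : ℕ) := Fin r → ℤ

/-- The embedding `X → X ⊗ ℝ`. -/
def toV {r : ℕ} (x : Lr r) : Vr r := fun i => (x i : ℝ)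

/-- The perfect pairing `⟨·,·⟩ : X × Y → ℤ`. -/
def pairZ {r : ℕ} (x y : Lr r) : ℤ := ∑ i, x i * y i

/-- The real extension of the pairing to `(X ⊗ ℝ) × Y → ℝ`. -/
def pairR {r : ℕ} (v : Vr r) (y : Lr r) : ℝ := ∑ i, v i * (y i : ℝ)

/-- The subgroup `ℤI` of `X` generated by a subset `I ⊆ X`. -/
def ZI {r : ℕ} (I : Finset (Lr r)) : AddSubgroup (Lr r) :=
  AddSubgroup.closure (I : Set (Lr r))

/-- The data of a reduced crystallographic root system `Φ ⊆ X` with a fixed positive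
system `Φ⁺`, simple roots `Φ_s`, coroots `α∨ ∈ Y`, a prime `p`, and the half-sum
`ρ ∈ X` of the positive roots. -/
structure ARDatum (r : ℕ) where
  Φ : Finset (Lr r)
  pos : Finset (Lr r)
  simples : Finset (Lr r)
  coroot : Lr r → Lr r
  p : ℕ
  ρ : Lr r
  hp : p.Prime
  root_ne_zero : ∀ α ∈ Φ, α ≠ 0
  pos_sub : pos ⊆ Φ
  simples_sub : simples ⊆ pos
  pos_or_neg : ∀ α ∈ Φ, α ∈ pos ∨ -α ∈ pos
  not_pos_and_neg : ∀ α ∈ pos, -α ∉ pos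
  neg_mem : ∀ α ∈ Φ, -α ∈ Φ
  root_coroot_two : ∀ α ∈ Φ, pairZ α (coroot α) = 2
  reflect_root_mem : ∀ α ∈ Φ, ∀ β ∈ Φ, β - pairZ β (coroot α) • α ∈ Φ
  reflect_coroot_mem : ∀ α ∈ Φ, ∀ β ∈ Φ,
    coroot β - pairZ α (coroot β) • coroot α ∈ coroot '' (Φ : Set (Lr r))
  reduced : ∀ α ∈ Φ, ∀ c : ℤ, c • α ∈ Φ → c = 1 ∨ c = -1
  pos_sum_simples : ∀ β ∈ pos, ∃ c : Lr r → ℕ, β = ∑ α ∈ simples, (c α : ℤ) • α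
  two_rho : (2 : ℤ) • ρ = ∑ α ∈ pos, α

namespace ARDatum

/-- The group of affine transformations of `X ⊗ ℝ`. -/
abbrev G (r : ℕ) := (Vr r) ≃ᵃ[ℝ] (Vr r)

variable {r : ℕ} (D : ARDatum r)

/-- `g` is the affine reflection `s_{α,mp} : v ↦ v − (⟨v,α∨⟩ − mp)·α`. -/
def IsRefl (α : Lr r) (m : ℤ) (g : G r) : Prop :=
  ∀ v : Vr r, g v = v - (pairR v (D.coroot α) - (m : ℝ) * (D.p : ℝ)) • toV α

/-- `g` is the linear reflection `s_α : v ↦ v − ⟨v,α∨⟩·α`. -/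
def IsLinRefl (α : Lr r) (g : G r) : Prop := D.IsRefl α 0 g

/-- `g` is the translation `t_{α,mp} : v ↦ v + mp·α`. -/
def IsTransl (α : Lr r) (m : ℤ) (g : G r) : Prop :=
  ∀ v : Vr r, g v = v + ((m : ℝ) * (D.p : ℝ)) • toV α

/-- The affine Weyl group `W_p`, generated by the `s_α` and the `t_{α,mp}`
for `α ∈ Φ⁺`, `m ∈ ℤ`. -/
def Wp : Subgroup (G r) :=
  Subgroup.closure ({g | ∃ α ∈ D.pos, D.IsLinRefl α g} ∪
    {g | ∃ α ∈ D.pos, ∃ m : ℤ, D.IsTransl α m g})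

/-- The finite Weyl group `W`, generated by the `s_α` for `α ∈ Φ⁺`. -/
def W : Subgroup (G r) :=
  Subgroup.closure {g | ∃ α ∈ D.pos, D.IsLinRefl α g}

/-- The subgroup `W_{I,p}` generated by the `s_α` and `t_{α,mp}` for `α ∈ I`. -/
def WIp (I : Finset (Lr r)) : Subgroup (G r) :=
  Subgroup.closure ({g | ∃ α ∈ I, D.IsLinRefl α g} ∪
    {g | ∃ α ∈ I, ∃ m : ℤ, D.IsTransl α m g})

/-- The subgroup `W_I` of `W` generated by the `s_α` for `α ∈ I`. -/
def WI (I : Finset (Lr r)) : Subgroup (G r) :=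
  Subgroup.closure {g | ∃ α ∈ I, D.IsLinRefl α g}

/-- `g` is a reflection (the reflections of `W_p` are exactly the `s_{α,mp}`). -/
def IsReflection (g : G r) : Prop := ∃ α ∈ D.pos, ∃ m : ℤ, D.IsRefl α m g

/-- The dot action `w·v := w(v+ρ) − ρ`. -/
def dot (g : G r) (v : Vr r) : Vr r := g (v + toV D.ρ) - toV D.ρ

/-- The hyperplane `H_{α,n} = {v : ⟨v+ρ,α∨⟩ = np}`. -/
def Hyp (α : Lr r) (n : ℤ) : Set (Vr r) :=
  {v | pairR (v + toV D.ρ) (D.coroot α) = (n : ℝ) * (D.p : ℝ)}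

/-- The complement of the union of all the hyperplanes `H_{α,n}`. -/
def Reg : Set (Vr r) :=
  {v | ∀ α ∈ D.pos, ∀ n : ℤ, pairR (v + toV D.ρ) (D.coroot α) ≠ (n : ℝ) * (D.p : ℝ)}

/-- The alcove containing `v` (the connected component of `v` in the complement of
the hyperplanes). -/
def alcoveOf (v : Vr r) : Set (Vr r) := connectedComponentIn D.Reg v

/-- `H_{α,n}` contains a wall of `A`, i.e. the interior of `closure A ∩ H_{α,n}`
inside the hyperplane `H_{α,n}` is nonempty. -/
def HasWall (A : Set (Vr r)) (α : Lr r) (n : ℤ) : Prop :=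
  ∃ x ∈ closure A ∩ D.Hyp α n, ∃ ε > 0,
    ∀ y ∈ D.Hyp α n, dist y x < ε → y ∈ closure A

/-- The fundamental alcove `C`. -/
def FundC : Set (Vr r) :=
  {v | ∀ α ∈ D.pos, 0 < pairR (v + toV D.ρ) (D.coroot α) ∧
    pairR (v + toV D.ρ) (D.coroot α) < (D.p : ℝ)}

/-- The closure `C̄` of the fundamental alcove. -/
def FundCBar : Set (Vr r) :=
  {v | ∀ α ∈ D.pos, 0 ≤ pairR (v + toV D.ρ) (D.coroot α) ∧
    pairR (v + toV D.ρ) (D.coroot α) ≤ (D.p : ℝ)}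

/-- The region `C_I`. -/
def CI (I : Finset (Lr r)) : Set (Vr r) :=
  {v | ∀ α ∈ D.pos, α ∈ ZI I → 0 < pairR (v + toV D.ρ) (D.coroot α) ∧
    pairR (v + toV D.ρ) (D.coroot α) < (D.p : ℝ)}

/-- The region `C̄_I`. -/
def CIBar (I : Finset (Lr r)) : Set (Vr r) :=
  {v | ∀ α ∈ D.pos, α ∈ ZI I → 0 ≤ pairR (v + toV D.ρ) (D.coroot α) ∧
    pairR (v + toV D.ρ) (D.coroot α) ≤ (D.p : ℝ)}

/-- `S_p`: the reflections of `W_p` in the walls of the fundamental alcove `C`. -/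
def Sp : Set (G r) :=
  {g | g ∈ D.Wp ∧ ∃ α ∈ D.pos, ∃ m : ℤ, D.IsRefl α m g ∧ D.HasWall D.FundC α m}

/-- One step of the order `⪯` (`↑`): `s_{α,mp}·u ⪯ u` whenever `⟨u+ρ,α∨⟩ ≥ mp`. -/
def UpStep (v u : Vr r) : Prop :=
  ∃ α ∈ D.pos, ∃ m : ℤ, (m : ℝ) * (D.p : ℝ) ≤ pairR (u + toV D.ρ) (D.coroot α) ∧
    v = u - (pairR (u + toV D.ρ) (D.coroot α) - (m : ℝ) * (D.p : ℝ)) • toV α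

/-- The order `⪯` (`↑`): the reflexive-transitive closure of `UpStep`. -/
def Up : Vr r → Vr r → Prop := Relation.ReflTransGen D.UpStep

/-- The strict order `≺`. -/
def Ups (v u : Vr r) : Prop := D.Up v u ∧ v ≠ u

/-- The order `≤`: `v ≤ u` iff `u − v` is a `ℤ≥0`-combination of the simple roots. -/
def Le (v u : Vr r) : Prop :=
  ∃ c : Lr r → ℕ, u - v = ∑ α ∈ D.simples, (c α : ℝ) • toV α

/-- The strict order `<`. -/
def Lt (v u : Vr r) : Prop := D.Le v u ∧ v ≠ u

/-- `X₊ = {ν ∈ X : ⟨ν+ρ,α∨⟩ ≥ 0 for all α ∈ Φ⁺}`, viewed inside `X ⊗ ℝ`. -/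
def XplusR : Set (Vr r) :=
  {v | (∃ ν : Lr r, toV ν = v) ∧ ∀ α ∈ D.pos, 0 ≤ pairR (v + toV D.ρ) (D.coroot α)}

/-- `n_α(v)`: the unique integer with `n_α(v)·p < ⟨v+ρ,α∨⟩ < (n_α(v)+1)·p`
(for `v` on none of the hyperplanes), realised as a floor. -/
def nfl (v : Vr r) (α : Lr r) : ℤ := ⌊pairR (v + toV D.ρ) (D.coroot α) / (D.p : ℝ)⌋

/-- `d(v) = ∑_{α ∈ Φ⁺} n_α(v)`. -/
def dfn (v : Vr r) : ℤ := ∑ α ∈ D.pos, D.nfl v α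

/-- The sublattice `pX` of `X`. -/
def pLat : AddSubgroup (Lr r) where
  carrier := {x | ∃ y : Lr r, x = (D.p : ℤ) • y}
  zero_mem' := ⟨0, by simp⟩
  add_mem' := by rintro a b ⟨y, rfl⟩ ⟨z, rfl⟩; exact ⟨y + z, (smul_add _ _ _).symm⟩
  neg_mem' := by rintro a ⟨y, rfl⟩; exact ⟨-y, (smul_neg _ _).symm⟩

/-- The orbit of `ν + pX` under the dot action of `W_I` on `X/pX`. -/
def dotOrbit (I : Finset (Lr r)) (ν : Lr r) : Set (Lr r ⧸ D.pLat) :=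
  {c | ∃ w ∈ D.WI I, ∃ ν' : Lr r, toV ν' = D.dot w (toV ν) ∧
    c = QuotientAddGroup.mk ν'}

end ARDatum

/-! The map `g ↦ g·ν + pX` from `W_I` onto the orbit is injective. If `g·ν ≡ g'·ν (mod pX)`,
the difference lies in `ℤI` (simple reflections move lattice points by roots of `I`), hence in
`pX ∩ ℤI = pℤI`, so `g·ν = t·(g'·ν)` for a translation `t ∈ W_p`. As `ν = w·λ` has trivial
stabiliser in `W_p`, `g = t g'`, and evaluating at `0`, which `g` and `g'` fix, gives `t = 1`. -/

section Lattice

variable {r : ℕ}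

lemma toV_injective : Function.Injective (toV (r := r)) :=
  fun _ _ h => funext fun i => Int.cast_injective (congrFun h i)

@[simp] lemma toV_zero : toV (0 : Lr r) = 0 := by
  funext i; simp [toV]

lemma toV_add (a b : Lr r) : toV (a + b) = toV a + toV b := by
  funext i; simp [toV]

lemma toV_sub (a b : Lr r) : toV (a - b) = toV a - toV b := by
  funext i; simp [toV]

lemma toV_neg (a : Lr r) : toV (-a) = -toV a := by
  funext i; simp [toV]

lemma toV_zsmul (n : ℤ) (a : Lr r) : toV (n • a) = (n : ℝ) • toV a := by
  funext i; simp [toV]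

lemma pairR_toV (x y : Lr r) : pairR (toV x) y = pairZ x y := by
  simp [pairR, pairZ, toV]

lemma pairR_sub (v w : Vr r) (y : Lr r) : pairR (v - w) y = pairR v y - pairR w y := by
  simp [pairR, sub_mul, Finset.sum_sub_distrib]

lemma pairR_smul (c : ℝ) (v : Vr r) (y : Lr r) : pairR (c • v) y = c * pairR v y := by
  simp [pairR, Finset.mul_sum, mul_assoc]

lemma ZI_mono {I J : Finset (Lr r)} (h : I ⊆ J) : ZI I ≤ ZI J :=
  AddSubgroup.closure_mono (Finset.coe_subset.2 h)

end Lattice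

namespace ARDatum

variable {r : ℕ} (D : ARDatum r)

lemma dot_one (v : Vr r) : D.dot 1 v = v := by
  simp [dot, AffineEquiv.coe_one]

lemma dot_mul (g h : G r) (v : Vr r) : D.dot (g * h) v = D.dot g (D.dot h v) := by
  simp [dot, AffineEquiv.coe_mul]

lemma dot_inv_dot (g : G r) (v : Vr r) : D.dot g⁻¹ (D.dot g v) = v := by
  rw [← dot_mul, inv_mul_cancel, dot_one]

lemma dot_constVAdd (a v : Vr r) : D.dot (AffineEquiv.constVAdd ℝ (Vr r) a) v = v + a := by
  simp [dot, vadd_eq_add]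
  abel

lemma isLinRefl_apply {α : Lr r} {g : G r} (hg : D.IsLinRefl α g) (v : Vr r) :
    g v = v - pairR v (D.coroot α) • toV α := by
  simpa using hg v

lemma isLinRefl_mul_self {α : Lr r} (hα : α ∈ D.Φ) {g : G r} (hg : D.IsLinRefl α g) :
    g * g = 1 := by
  have hαα : pairR (toV α) (D.coroot α) = 2 := by
    rw [pairR_toV, D.root_coroot_two α hα]; norm_num
  refine AffineEquiv.ext fun v => ?_
  rw [AffineEquiv.coe_mul, Function.comp_apply, D.isLinRefl_apply hg (g v),
    D.isLinRefl_apply hg v, pairR_sub, pairR_smul, hαα, AffineEquiv.coe_one, id_eq]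
  module

lemma dot_toV_of_isLinRefl {α : Lr r} {g : G r} (hg : D.IsLinRefl α g) (x : Lr r) :
    D.dot g (toV x) = toV (x - pairZ (x + D.ρ) (D.coroot α) • α) := by
  rw [dot, D.isLinRefl_apply hg, ← toV_add, pairR_toV, toV_sub, toV_zsmul, toV_add]
  abel

lemma W_le_Wp : D.W ≤ D.Wp :=
  Subgroup.closure_mono Set.subset_union_left

lemma WI_le_W {I : Finset (Lr r)} (hI : I ⊆ D.pos) : D.WI I ≤ D.W :=
  Subgroup.closure_mono fun _ ⟨α, hα, hg⟩ => ⟨α, hI hα, hg⟩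

lemma apply_zero_of_mem_W {g : G r} (hg : g ∈ D.W) : g 0 = 0 := by
  induction hg using Subgroup.closure_induction with
  | mem g hg =>
    obtain ⟨α, -, hα⟩ := hg
    simp [D.isLinRefl_apply hα, pairR]
  | one => rfl
  | mul g h _ _ hg hh => rw [AffineEquiv.coe_mul, Function.comp_apply, hh, hg]
  | inv g _ hg => rw [AffineEquiv.inv_def, AffineEquiv.symm_apply_eq, hg]

lemma constVAdd_mem_Wp {y : Lr r} (hy : y ∈ ZI D.pos) :
    AffineEquiv.constVAdd ℝ (Vr r) ((D.p : ℝ) • toV y) ∈ D.Wp := by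
  induction hy using AddSubgroup.closure_induction with
  | mem α hα =>
    refine Subgroup.subset_closure (Or.inr ⟨α, hα, 1, fun v => ?_⟩)
    simp [vadd_eq_add, add_comm]
  | zero =>
    rw [toV_zero, smul_zero, AffineEquiv.constVAdd_zero, ← AffineEquiv.one_def]
    exact D.Wp.one_mem
  | add y z _ _ hy hz =>
    rw [toV_add, smul_add, AffineEquiv.constVAdd_add, ← AffineEquiv.mul_def]
    exact D.Wp.mul_mem hy hz
  | neg y _ hy =>
    rw [toV_neg, smul_neg, ← AffineEquiv.constVAdd_symm, ← AffineEquiv.inv_def]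
    exact D.Wp.inv_mem hy

lemma exists_dot_toV_eq {I : Finset (Lr r)} (hI : I ⊆ D.Φ) {g : G r} (hg : g ∈ D.WI I)
    (x : Lr r) : ∃ x', D.dot g (toV x) = toV x' ∧ x' - x ∈ ZI I := by
  have hgen : ∀ α ∈ I, ∀ g, D.IsLinRefl α g →
      ∀ x, ∃ x', D.dot g (toV x) = toV x' ∧ x' - x ∈ ZI I :=
    fun α hαI g hα x => ⟨_, D.dot_toV_of_isLinRefl hα x, by
      rw [sub_sub_cancel_left]
      exact AddSubgroup.neg_mem _ (AddSubgroup.zsmul_mem _ (AddSubgroup.subset_closure hαI) _)⟩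
  induction hg using Subgroup.closure_induction'' generalizing x with
  | mem g hg =>
    obtain ⟨α, hαI, hα⟩ := hg
    exact hgen α hαI g hα x
  | inv_mem g hg =>
    obtain ⟨α, hαI, hα⟩ := hg
    rw [inv_eq_of_mul_eq_one_left (D.isLinRefl_mul_self (hI hαI) hα)]
    exact hgen α hαI g hα x
  | one => exact ⟨x, D.dot_one _, by simp⟩
  | mul g h _ _ hg hh =>
    obtain ⟨x₁, hx₁, hx₁I⟩ := hh x
    obtain ⟨x₂, hx₂, hx₂I⟩ := hg x₁
    refine ⟨x₂, by rw [dot_mul, hx₁, hx₂], ?_⟩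
    simpa using add_mem hx₂I hx₁I

def DotStabilizerTrivial (v : Vr r) : Prop := ∀ g ∈ D.Wp, D.dot g v = v → g = 1

variable {D}

lemma DotStabilizerTrivial.dot {v : Vr r} (hv : D.DotStabilizerTrivial v) {w : G r}
    (hw : w ∈ D.Wp) : D.DotStabilizerTrivial (D.dot w v) := by
  intro g hg hfix
  have hconj : w⁻¹ * g * w = 1 := by
    refine hv _ (mul_mem (mul_mem (inv_mem hw) hg) hw) ?_
    rw [dot_mul, dot_mul, hfix, dot_inv_dot]
  calc g = w * (w⁻¹ * g * w) * w⁻¹ := by group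
    _ = 1 := by rw [hconj]; group

lemma DotStabilizerTrivial.eq_of_dot_eq_add {v : Vr r} (hv : D.DotStabilizerTrivial v)
    {g g' : G r} (hg : g ∈ D.W) (hg' : g' ∈ D.W) {y : Lr r} (hy : y ∈ ZI D.pos)
    (h : D.dot g v = D.dot g' v + (D.p : ℝ) • toV y) : g = g' := by
  have ht := D.constVAdd_mem_Wp hy
  have htg' : AffineEquiv.constVAdd ℝ (Vr r) ((D.p : ℝ) • toV y) * g' = g := by
    refine inv_mul_eq_one.mp (hv _ (mul_mem (inv_mem (mul_mem ht (D.W_le_Wp hg')))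
      (D.W_le_Wp hg)) ?_)
    rw [dot_mul, h, ← dot_constVAdd, ← D.dot_mul _ g', dot_inv_dot]
  have hpy : (D.p : ℝ) • toV y = 0 := by
    simpa [D.apply_zero_of_mem_W hg, D.apply_zero_of_mem_W hg', vadd_eq_add]
      using congrArg (· 0) htg'
  rw [← htg', hpy, AffineEquiv.constVAdd_zero, ← AffineEquiv.one_def, one_mul]

end ARDatum

theorem stmt1_general {r : ℕ} (D : ARDatum r)
    (I : Finset (Lr r)) (hI : I ⊆ D.simples)
    (lam : Lr r)
    (hlamstab : ∀ g ∈ D.Wp, D.dot g (toV lam) = toV lam → g = 1)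
    (hpXI : ∀ x : Lr r, (x ∈ D.pLat ∧ x ∈ ZI I) ↔ ∃ y ∈ ZI I, x = (D.p : ℤ) • y)
    (w : ARDatum.G r) (hw : w ∈ D.Wp)
    (ν : Lr r) (hν : toV ν = D.dot w (toV lam)) :
    (D.dotOrbit I ν).ncard = Nat.card (D.WI I) := by
  have hIpos : I ⊆ D.pos := hI.trans D.simples_sub
  have hstab : D.DotStabilizerTrivial (toV ν) :=
    hν ▸ ARDatum.DotStabilizerTrivial.dot hlamstab hw
  choose F hF hFI using fun g : D.WI I => D.exists_dot_toV_eq (hIpos.trans D.pos_sub) g.2 ν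
  have horbit : D.dotOrbit I ν = Set.range fun g => (F g : Lr r ⧸ D.pLat) := by
    ext c
    constructor
    · rintro ⟨g, hg, ν', hν', rfl⟩
      exact ⟨⟨g, hg⟩, congrArg _ (toV_injective ((hF _).symm.trans hν'.symm))⟩
    · rintro ⟨g, rfl⟩
      exact ⟨g, g.2, F g, (hF g).symm, rfl⟩
  rw [horbit, Set.ncard_range_of_injective]
  intro g g' hgg'
  have hdiff : F g - F g' = (F g - ν) - (F g' - ν) := by abel
  obtain ⟨y, hy, hpy⟩ := (hpXI (F g - F g')).1
    ⟨QuotientAddGroup.eq_iff_sub_mem.1 hgg', hdiff ▸ sub_mem (hFI g) (hFI g')⟩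
  refine Subtype.ext (hstab.eq_of_dot_eq_add (D.WI_le_W hIpos g.2) (D.WI_le_W hIpos g'.2)
    (ZI_mono hIpos hy) ?_)
  rw [hF, hF, eq_add_of_sub_eq' hpy, toV_add, toV_zsmul, Int.cast_natCast]

/-- For every `w ∈ W_p`, the orbit of `w·λ + pX` under the dot action of `W_I`
on `X/pX` has exactly `|W_I|` elements. -/
theorem stmt1 {r : ℕ} (D : ARDatum r)
    (I : Finset (Lr r)) (hI : I ⊆ D.simples)
    (s : ARDatum.G r) (hs : s ∈ D.Sp)
    (lam mu : Lr r) (hlam : toV lam ∈ D.FundC) (hmu : toV mu ∈ D.FundCBar)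
    (hmustab : ∀ g ∈ D.Wp, (D.dot g (toV mu) = toV mu ↔ g = 1 ∨ g = s))
    (hlamstab : ∀ g ∈ D.Wp, D.dot g (toV lam) = toV lam → g = 1)
    (hpXI : ∀ x : Lr r, (x ∈ D.pLat ∧ x ∈ ZI I) ↔ ∃ y ∈ ZI I, x = (D.p : ℤ) • y)
    (w : ARDatum.G r) (hw : w ∈ D.Wp)
    (ν : Lr r) (hν : toV ν = D.dot w (toV lam)) :
    (D.dotOrbit I ν).ncard = Nat.card (D.WI I) :=
  stmt1_general D I hI lam hlamstab hpXI w hw ν hν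

end
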